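/- arXiv:2411.11129 — 2 statements merged into one kernel-verified Lean document; each statement's English description precedes it below -/
import Mathlib

section
/- The explicit finite-difference scheme θ_j^{k+1} = θ_j^k + (Δt/Δz^2)(B(θ_{j+1}^k/n_0) - 2B(θ_j^k/n_0) + B(θ_{j-1}^k/n_0)) preserves nonnegativity and the upper bound n_0: if 0 ≤ θ_j^k ≤ n_0 for all j and Δt/Δz^2 ≤ n_0/(2L) where L = sup|B'|, then 0 ≤ θ_j^{k+1} ≤ n_0 for all interior j. -/
/-!
The update is a monotone scheme: it is nondecreasing in the two neighbouring values because `B`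
is monotone, and nondecreasing in the central value because the CFL condition makes
`x ↦ x - 2 μ B (x / n0)` monotone (the loss `2 μ (B (y / n0) - B (x / n0))` is at most
`2 μ L (y - x) / n0 ≤ y - x`). Constant data are fixed points, so the update of data in `[0, n0]`
lies between the updates of the constants `0` and `n0`.
-/

/-- `μ` plays the role of `Δt / Δz ^ 2` and `h` that of `x ↦ B (x / n0)`. -/
def explicitStep (μ : ℝ) (h : ℝ → ℝ) (a b c : ℝ) : ℝ :=
  b + μ * (h a - 2 * h b + h c)

theorem explicitStep_self (μ : ℝ) (h : ℝ → ℝ) (x : ℝ) : explicitStep μ h x x x = x := by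
  unfold explicitStep
  ring

theorem monotone_sub_mul_of_abs_sub_le {h : ℝ → ℝ} {K κ : ℝ}
    (hh : ∀ x y, |h x - h y| ≤ K * |x - y|) (hκ : 0 ≤ κ) (hκK : κ * K ≤ 1) :
    Monotone fun x => x - κ * h x := by
  intro x y hxy
  have hK : h y - h x ≤ K * (y - x) := by
    simpa only [abs_of_nonneg (sub_nonneg.2 hxy)] using (le_abs_self _).trans (hh y x)
  have : κ * (h y - h x) ≤ y - x :=
    calc κ * (h y - h x) ≤ κ * (K * (y - x)) := mul_le_mul_of_nonneg_left hK hκ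
      _ = κ * K * (y - x) := by ring
      _ ≤ 1 * (y - x) := mul_le_mul_of_nonneg_right hκK (sub_nonneg.2 hxy)
      _ = y - x := one_mul _
  dsimp only
  linarith

theorem explicitStep_mono {μ : ℝ} {h : ℝ → ℝ} (hμ : 0 ≤ μ) (hh : Monotone h)
    (hcentre : Monotone fun x => x - 2 * μ * h x) {a a' b b' c c' : ℝ}
    (ha : a ≤ a') (hb : b ≤ b') (hc : c ≤ c') :
    explicitStep μ h a b c ≤ explicitStep μ h a' b' c' := by
  have hA := mul_le_mul_of_nonneg_left (hh ha) hμ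
  have hB := hcentre hb
  have hC := mul_le_mul_of_nonneg_left (hh hc) hμ
  dsimp only at hB
  unfold explicitStep
  linarith

theorem stmt_13_general (n0 Δt Δz L : ℝ) (hn0 : 0 < n0) (hΔt : 0 < Δt) (hL : 0 < L)
    (B : ℝ → ℝ) (hmono : Monotone B)
    (hLip : ∀ x y : ℝ, |B x - B y| ≤ L * |x - y|)
    (hCFL : Δt / Δz ^ 2 ≤ n0 / (2 * L))
    (θ : ℤ → ℝ) (hθ : ∀ j, θ j ∈ Set.Icc 0 n0) (j : ℤ) :
    θ j + Δt / Δz ^ 2 * (B (θ (j + 1) / n0) - 2 * B (θ j / n0) + B (θ (j - 1) / n0))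
      ∈ Set.Icc 0 n0 := by
  set μ := Δt / Δz ^ 2
  set h : ℝ → ℝ := fun x => B (x / n0)
  have hμ : 0 ≤ μ := div_nonneg hΔt.le (sq_nonneg Δz)
  have hh : Monotone h := hmono.comp fun x y hxy => div_le_div_of_nonneg_right hxy hn0.le
  have hhLip : ∀ x y, |h x - h y| ≤ L / n0 * |x - y| := fun x y =>
    calc |h x - h y| ≤ L * |x / n0 - y / n0| := hLip _ _
      _ = L / n0 * |x - y| := by rw [← sub_div, abs_div, abs_of_pos hn0]; ring
  have hCFL' : 2 * μ * (L / n0) ≤ 1 := by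
    rw [le_div_iff₀ (by positivity)] at hCFL
    calc 2 * μ * (L / n0) = μ * (2 * L) / n0 := by ring
      _ ≤ 1 := (div_le_one hn0).2 hCFL
  have hcentre := monotone_sub_mul_of_abs_sub_le hhLip (by positivity) hCFL'
  obtain ⟨ha0, han⟩ := hθ (j + 1)
  obtain ⟨hb0, hbn⟩ := hθ j
  obtain ⟨hc0, hcn⟩ := hθ (j - 1)
  change explicitStep μ h (θ (j + 1)) (θ j) (θ (j - 1)) ∈ Set.Icc 0 n0
  constructor
  · simpa only [explicitStep_self] using explicitStep_mono hμ hh hcentre ha0 hb0 hc0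
  · simpa only [explicitStep_self] using explicitStep_mono hμ hh hcentre han hbn hcn

theorem stmt_13 (n0 Δt Δz L : ℝ) (hn0 : 0 < n0) (hΔt : 0 < Δt) (hΔz : 0 < Δz) (hL : 0 < L)
    (B : ℝ → ℝ) (hmono : Monotone B)
    (hLip : ∀ x y : ℝ, |B x - B y| ≤ L * |x - y|)
    (hCFL : Δt / Δz ^ 2 ≤ n0 / (2 * L))
    (θ : ℤ → ℝ) (hθ : ∀ j, θ j ∈ Set.Icc 0 n0) (j : ℤ) :
    θ j + Δt / Δz ^ 2 * (B (θ (j + 1) / n0) - 2 * B (θ j / n0) + B (θ (j - 1) / n0))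
      ∈ Set.Icc 0 n0 :=
  stmt_13_general n0 Δt Δz L hn0 hΔt hL B hmono hLip hCFL θ hθ j
end

section
/- Under the CFL condition Δt/Δz^2 ≤ n_0/(2L) with L the Lipschitz constant of B, the finite-difference update operator is monotone: if θ_j ≤ η_j for all j (with θ, η ∈ [0, n_0]^ℤ), then the updated values satisfy θ_j' ≤ η_j' for all interior j. -/
/-!
The update is `θ_j' = (θ_j - 2μ F θ_j) + μ (F θ_{j+1} + F θ_{j-1})` with `μ = Δt/Δz²` and
`F x = B (x / n₀)`, which is monotone and `L / n₀`-Lipschitz. The neighbour terms are monotone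
because `F` is; the centre term `x ↦ x - 2μ F x` is monotone because its slope is at least
`1 - 2μ L / n₀ ≥ 0`, which is exactly the CFL condition.
-/

lemma monotone_sub_mul_of_abs_sub_le_s14 {F : ℝ → ℝ} {K c : ℝ}
    (hF : ∀ x y, |F x - F y| ≤ K * |x - y|) (hc : 0 ≤ c) (hcK : c * K ≤ 1) :
    Monotone fun x => x - c * F x := by
  intro x y hxy
  have hFxy : F y - F x ≤ K * (y - x) := by
    simpa only [abs_of_nonneg (sub_nonneg.2 hxy)] using (le_abs_self _).trans (hF y x)
  nlinarith [mul_le_mul_of_nonneg_left hFxy hc, mul_le_mul_of_nonneg_right hcK (sub_nonneg.2 hxy)]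

lemma three_point_step_mono {F : ℝ → ℝ} {K μ : ℝ} (hmono : Monotone F)
    (hF : ∀ x y, |F x - F y| ≤ K * |x - y|) (hμ : 0 ≤ μ) (hCFL : 2 * μ * K ≤ 1)
    {a b c a' b' c' : ℝ} (ha : a ≤ a') (hb : b ≤ b') (hc : c ≤ c') :
    b + μ * (F a - 2 * F b + F c) ≤ b' + μ * (F a' - 2 * F b' + F c') := by
  have hcentre : b - 2 * μ * F b ≤ b' - 2 * μ * F b' :=
    monotone_sub_mul_of_abs_sub_le_s14 hF (by positivity) hCFL hb
  have hleft := mul_le_mul_of_nonneg_left (hmono ha) hμ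
  have hright := mul_le_mul_of_nonneg_left (hmono hc) hμ
  linarith

lemma abs_comp_div_sub_le {B : ℝ → ℝ} {L n : ℝ} (hn : 0 < n)
    (hB : ∀ x y, |B x - B y| ≤ L * |x - y|) (x y : ℝ) :
    |B (x / n) - B (y / n)| ≤ L / n * |x - y| := by
  calc |B (x / n) - B (y / n)| ≤ L * |x / n - y / n| := hB _ _
    _ = L / n * |x - y| := by
      rw [← sub_div, abs_div, abs_of_pos hn]
      ring

theorem stmt_14_general (n0 Δt Δz L : ℝ) (hn0 : 0 < n0) (hΔt : 0 < Δt) (hL : 0 < L)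
    (B : ℝ → ℝ) (hmono : Monotone B)
    (hLip : ∀ x y : ℝ, |B x - B y| ≤ L * |x - y|)
    (hCFL : Δt / Δz ^ 2 ≤ n0 / (2 * L))
    (θ η : ℤ → ℝ)
    (hle : ∀ j, θ j ≤ η j) (j : ℤ) :
    θ j + Δt / Δz ^ 2 * (B (θ (j + 1) / n0) - 2 * B (θ j / n0) + B (θ (j - 1) / n0))
      ≤ η j + Δt / Δz ^ 2 * (B (η (j + 1) / n0) - 2 * B (η j / n0) + B (η (j - 1) / n0)) := by
  have hμ : 0 ≤ Δt / Δz ^ 2 := by positivity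
  have hCFL' : 2 * (Δt / Δz ^ 2) * (L / n0) ≤ 1 :=
    calc 2 * (Δt / Δz ^ 2) * (L / n0) = Δt / Δz ^ 2 * (2 * L) / n0 := by ring
      _ ≤ 1 := (div_le_one hn0).2 ((le_div_iff₀ (by positivity)).1 hCFL)
  exact three_point_step_mono (F := fun x => B (x / n0))
    (hmono.comp fun _ _ h => div_le_div_of_nonneg_right h hn0.le)
    (abs_comp_div_sub_le hn0 hLip) hμ hCFL' (hle _) (hle _) (hle _)

theorem stmt_14 (n0 Δt Δz L : ℝ) (hn0 : 0 < n0) (hΔt : 0 < Δt) (hΔz : 0 < Δz) (hL : 0 < L)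
    (B : ℝ → ℝ) (hmono : Monotone B)
    (hLip : ∀ x y : ℝ, |B x - B y| ≤ L * |x - y|)
    (hCFL : Δt / Δz ^ 2 ≤ n0 / (2 * L))
    (θ η : ℤ → ℝ)
    (hθ : ∀ j, θ j ∈ Set.Icc 0 n0) (hη : ∀ j, η j ∈ Set.Icc 0 n0)
    (hle : ∀ j, θ j ≤ η j) (j : ℤ) :
    θ j + Δt / Δz ^ 2 * (B (θ (j + 1) / n0) - 2 * B (θ j / n0) + B (θ (j - 1) / n0))
      ≤ η j + Δt / Δz ^ 2 * (B (η (j + 1) / n0) - 2 * B (η j / n0) + B (η (j - 1) / n0)) :=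
  stmt_14_general n0 Δt Δz L hn0 hΔt hL B hmono hLip hCFL θ η hle j
end
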